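/- Let M be a map and let E0 be a twisted edge of M. Then no extremity of E0 is a leaf, and M \ E0 has the same numbers of vertices, faces and connected components as M and one fewer edge; consequently d(M \ E0) = d(M) − 1. -/

import Mathlib

open Equiv Polynomial

open scoped Classical

noncomputable section

variable {α : Type*}

/-- `f` is a *pairing* of the finite set `S`: an involution of the ambient type which
moves exactly the elements of `S` (i.e., a fixpoint-free involution of `S`, extended by
the identity outside of `S`); the pairs of the pairing are the orbits `{a, f a}`. -/
def IsPairing (S : Finset α) (f : Equiv.Perm α) : Prop :=
  (∀ a, f (f a) = a) ∧ ∀ a, f a ≠ a ↔ a ∈ S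

/-- The pairing `P_{{s₁,s₂}}` obtained from the pairing `f` by removing the elements
`s₁, s₂` : if `{s₁,s₂}` is a pair of `f` it is simply deleted; otherwise the pairs
containing `s₁` and `s₂` are deleted and the partners `f s₁`, `f s₂` are matched
together. -/
def removeP (f : Equiv.Perm α) (s₁ s₂ : α) : Equiv.Perm α :=
  Equiv.swap s₁ s₂ * Equiv.swap s₁ (f s₂) * Equiv.swap s₂ (f s₁) * f

/-- `t` lies in the polygon of `L(b,w)` containing `s`, in *even position* with
respect to `s`: `t` is obtained from `s` by an odd alternating word in the
involutions `b` and `w`. -/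
def EvenPos (b w : Equiv.Perm α) (s t : α) : Prop :=
  ∃ j : ℤ, t = ((w * b) ^ j * b) s

/-- `t` lies in the polygon of `L(b,w)` containing `s`, in *odd position* with respect
to `s`: `t` is obtained from `s` by an even alternating word in the involutions
`b` and `w`. -/
def OddPos (b w : Equiv.Perm α) (s t : α) : Prop :=
  ∃ j : ℤ, t = ((w * b) ^ j) s

/-- `s` and `t` lie in the same polygon of `L(b,w)`. -/
def SameFace (b w : Equiv.Perm α) (s t : α) : Prop :=
  EvenPos b w s t ∨ OddPos b w s t

/-- The edge `{s,t}` is *straight*: both edge-sides lie in the same face,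
in even position. -/
def IsStraight (b w : Equiv.Perm α) (s t : α) : Prop :=
  SameFace b w s t ∧ EvenPos b w s t

/-- The edge `{s,t}` is *twisted*: both edge-sides lie in the same face,
in odd position. -/
def IsTwisted (b w : Equiv.Perm α) (s t : α) : Prop :=
  SameFace b w s t ∧ OddPos b w s t

/-- The edge `{s,t}` is an *interface* edge: its edge-sides lie in two
different faces. -/
def IsInterface (b w : Equiv.Perm α) (s t : α) : Prop :=
  ¬ SameFace b w s t

/-- The polygon (face) of `L(b,w)` containing `s`, as the set of its edge-sides. -/
def faceOf (S : Finset α) (b w : Equiv.Perm α) (s : α) : Finset α :=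
  S.filter (SameFace b w s)

/-- The collection of polygons (faces) of `L(b,w)`. -/
def faces (S : Finset α) (b w : Equiv.Perm α) : Finset (Finset α) :=
  S.image (faceOf S b w)

/-- The number of polygons (faces) of `L(b,w)`. -/
def numFaces (S : Finset α) (b w : Equiv.Perm α) : ℕ :=
  (faces S b w).card

/-- The *type* of the couple of pairings `(b,w)`: the multiset of half-lengths of the
polygons of `L(b,w)`. -/
def faceType (S : Finset α) (b w : Equiv.Perm α) : Multiset ℕ :=
  (faces S b w).val.map fun F => F.card / 2

/-- `s` and `t` lie in the same connected component of the map `(b,w,e)`: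
`t` is obtained from `s` by applying partner maps in `b`, `w`, `e` repeatedly. -/
def SameComponent (b w e : Equiv.Perm α) (s t : α) : Prop :=
  ∃ g ∈ Subgroup.closure ({b, w, e} : Set (Equiv.Perm α)), g s = t

/-- The number of connected components of the map `(S, b, w, e)`. -/
def numComponents (S : Finset α) (b w e : Equiv.Perm α) : ℕ :=
  (S.image fun s => S.filter (SameComponent b w e s)).card

/-- The number of vertices of the map `(S, b, w, e)`: black vertices are the polygons
of `L(b,e)`, white vertices are the polygons of `L(w,e)`. -/
def numVertices (S : Finset α) (b w e : Equiv.Perm α) : ℕ :=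
  numFaces S b e + numFaces S w e

/-- The number of edges of a map with edge-side set `S`. -/
def numEdges (S : Finset α) : ℕ := S.card / 2

/-- The Euler characteristic `χ(M) = |V(M)| - |E(M)| + |F(M)|` of the map
`M = (S, b, w, e)`. -/
def eulerChar (S : Finset α) (b w e : Equiv.Perm α) : ℤ :=
  (numVertices S b w e : ℤ) - (numEdges S : ℤ) + (numFaces S b w : ℤ)

/-- The quantity `d(M) = 2·(number of connected components of M) - χ(M)`. -/
def dInv (S : Finset α) (b w e : Equiv.Perm α) : ℤ :=
  2 * (numComponents S b w e : ℤ) - eulerChar S b w e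

/-- The edge `{s, e s}` of the map `(b, w, e)` is a *bridge*: either one of its
extremities is a leaf (the pair belongs to `b` or to `w` as well), or its two
extremities lie in different connected components of the map with this edge removed. -/
def IsBridge (b w e : Equiv.Perm α) (s : α) : Prop :=
  (b s = e s ∨ w s = e s) ∨
    ¬ SameComponent (removeP b s (e s)) (removeP w s (e s)) (removeP e s (e s))
        (b s) (w s)

/-- The weight of the edge `{s,t}` in the map with face structure given by `(b,w)`,
as a polynomial in the variable `γ` (over `ℚ`): `1` for a straight edge, `γ` for a
twisted edge, `1/2` for an interface edge. -/
def edgeWeight (b w : Equiv.Perm α) (s t : α) : Polynomial ℚ :=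
  if IsStraight b w s t then 1
  else if IsTwisted b w s t then Polynomial.X
  else Polynomial.C (1 / 2)

/-- The weight `w_{M,≺}` of a map `(b,w,e)` equipped with a history, the latter
encoded as the list of the edges in increasing order (each edge represented by one
of its edge-sides): the product of the weights of the edges, each weight being
computed in the map in which all previous edges have already been removed. -/
def histWeight : Equiv.Perm α → Equiv.Perm α → Equiv.Perm α → List α → Polynomial ℚ
  | _, _, _, [] => 1
  | b, w, e, s :: L =>
      edgeWeight b w s (e s) *
        histWeight (removeP b s (e s)) (removeP w s (e s)) (removeP e s (e s)) L

/-- `L` encodes a *history* (a linear order on the edges) of the map with edge-side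
set `S` and edge pairing `e`: it lists every edge exactly once, each edge being
represented by its smaller edge-side. -/
def IsHistory [LinearOrder α] (S : Finset α) (e : Equiv.Perm α) (L : List α) : Prop :=
  L.Nodup ∧ (∀ s ∈ L, s ∈ S ∧ s < e s) ∧ ∀ a ∈ S, a ∈ L ∨ e a ∈ L

/-- The *measure of non-orientability* `w_M` of the map `(S,b,w,e)`: the average of
`w_{M,≺}` over all `n!` histories `≺`, as a polynomial in the variable `γ` over `ℚ`. -/
def mapWeight [LinearOrder α] (S : Finset α) (b w e : Equiv.Perm α) : Polynomial ℚ :=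
  Polynomial.C (1 / ((numEdges S).factorial : ℚ)) *
    ∑ F ∈ (Fintype.piFinset fun _ : Fin (numEdges S) => S).filter
        (fun F => IsHistory S e (List.ofFn F)),
      histWeight b w e (List.ofFn F)

/-- The number of embeddings `N_M(λ)` of the underlying bipartite graph of the map
`(S,b,w,e)` into the Young diagram whose list of row lengths is `lam`: an embedding
maps black vertices (polygons of `L(b,e)`) to rows, white vertices (polygons of
`L(w,e)`) to columns, and each edge to the box at the corresponding intersection;
it is encoded by a pair of functions on edge-sides that are constant on vertices. -/
def NMap (lam : List ℕ) (S : Finset α) (b w e : Equiv.Perm α) : ℕ :=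
  Nat.card {fp : (α → ℕ) × (α → ℕ) //
    (∀ s, s ∉ S → fp.1 s = 0 ∧ fp.2 s = 0) ∧
    (∀ s ∈ S, fp.1 (b s) = fp.1 s ∧ fp.1 (e s) = fp.1 s) ∧
    (∀ s ∈ S, fp.2 (w s) = fp.2 s ∧ fp.2 (e s) = fp.2 s) ∧
    ∀ s ∈ S, fp.2 s < lam.getD (fp.1 s) 0}

/-- The orientability generating series `\widehat{Ch}^{(α)}_π(λ)`, where the face-type
`π` is realized by the fixed couple of pairings `(b,w)` of `S`, `lam` is the list of
row lengths of the Young diagram `λ`, and `a` is the Jack parameter `α`: the sum over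
all pairings `e` of `S` (i.e., over all maps of face-type `π`) of
`(-1/√α)^{|V_•(M)|} (√α)^{|V_∘(M)|} w_M N_M(λ)`, times the sign `(-1)^{ℓ(π)}`,
where `w_M` is evaluated at `γ = (1-α)/√α`. -/
def genSeries [Fintype α] [LinearOrder α] (lam : List ℕ) (S : Finset α)
    (b w : Equiv.Perm α) (a : ℝ) : ℝ :=
  (-1 : ℝ) ^ numFaces S b w *
    ∑ e ∈ Finset.univ.filter fun e : Equiv.Perm α => IsPairing S e,
      (-1 / Real.sqrt a) ^ numFaces S b e * (Real.sqrt a) ^ numFaces S w e *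
        Polynomial.aeval ((1 - a) / Real.sqrt a) (mapWeight S b w e) *
          (NMap lam S b w e : ℝ)

/-- The number of embeddings `N_G(λ)` of the bipartite graph `G` with black vertex set
`ι`, white vertex set `κ` and edge relation `Edg` into the Young diagram whose list of
row lengths is `lam`: black vertices are mapped to rows of `λ`, white vertices to
columns of `λ`, and every edge to the box at the corresponding intersection, which
must belong to `λ`. -/
def NGraph {ι κ : Type*} (lam : List ℕ) (Edg : ι → κ → Prop) : ℕ :=
  Nat.card {fp : (ι → ℕ) × (κ → ℕ) //
    (∀ u, 0 < lam.getD (fp.1 u) 0) ∧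
    (∀ v, ∃ i, fp.2 v < lam.getD i 0) ∧
    ∀ u v, Edg u v → fp.2 v < lam.getD (fp.1 u) 0}

/-!
Every count in the statement is a number of orbits on the edge-sides: faces and vertices are
orbits of the group generated by two of the pairings `b, w, e`, components those of the group
generated by all three. Deleting `E₀ = {s, t}` replaces each generator `f` by `removeP f s t`,
which agrees with `f` away from `s, t, f s, f t` and joins `f s` to `f t`. Orbits avoiding `s`
are untouched, and a path of the old orbit through `s` or `t` can be rerouted as soon as all
corners `f s` of the deleted edge are joined in `M \ E₀`. For vertices there is only one such
corner. For faces this is where twistedness enters: `t` lies in odd position on the face of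
`s`, so the orbit of `b s` under `w * b` avoids `s` and `t`, and following it from `w s` one
reaches `b s` or `b t` without using the deleted edge-sides.
-/

theorem removeP_apply (f : Perm α) (s t x : α) :
    removeP f s t x = swap s t (swap s (f t) (swap t (f s) (f x))) := by
  simp [removeP, Perm.mul_apply]

section removeP

variable {f : Perm α} {s t : α}

theorem removeP_apply_of_ne {x : α} (hxs : x ≠ s) (hxt : x ≠ t) (hfxs : f x ≠ s)
    (hfxt : f x ≠ t) : removeP f s t x = f x := by
  rw [removeP_apply, swap_apply_of_ne_of_ne hfxt (f.injective.ne hxs),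
    swap_apply_of_ne_of_ne hfxs (f.injective.ne hxt), swap_apply_of_ne_of_ne hfxs hfxt]

theorem removeP_apply_left (hst : s ≠ t) (ht : f t ≠ t) : removeP f s t s = s := by
  rw [removeP_apply, swap_apply_right, swap_apply_of_ne_of_ne hst.symm ht.symm,
    swap_apply_right]

theorem removeP_apply_right (hst : s ≠ t) (ht : f t ≠ t) : removeP f s t t = t := by
  rw [removeP_apply, swap_apply_of_ne_of_ne ht (f.injective.ne hst.symm), swap_apply_right,
    swap_apply_left]

theorem removeP_apply_apply_left (hf : Function.Involutive f) (hst : s ≠ t) (hs : f s ≠ s)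
    (ht : f t ≠ t) (hfs : f s ≠ t) : removeP f s t (f s) = f t := by
  have hft : f t ≠ s := fun h => hfs (by rw [← h, hf])
  rw [removeP_apply, hf, swap_apply_of_ne_of_ne hst hs.symm, swap_apply_left,
    swap_apply_of_ne_of_ne hft ht]

theorem removeP_apply_apply_right (hf : Function.Involutive f) (hst : s ≠ t) (hs : f s ≠ s)
    (hfs : f s ≠ t) : removeP f s t (f t) = f s := by
  have hft : f t ≠ s := fun h => hfs (by rw [← h, hf])
  rw [removeP_apply, hf, swap_apply_left, swap_apply_of_ne_of_ne hs (f.injective.ne hst),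
    swap_apply_of_ne_of_ne hs hfs]

theorem removeP_involutive (hf : Function.Involutive f) (hst : s ≠ t) (hs : f s ≠ s)
    (ht : f t ≠ t) : Function.Involutive (removeP f s t) := by
  intro x
  by_cases hxs : x = s
  · rw [hxs, removeP_apply_left hst ht, removeP_apply_left hst ht]
  by_cases hxt : x = t
  · rw [hxt, removeP_apply_right hst ht, removeP_apply_right hst ht]
  by_cases hfxs : f x = s
  · have hfs : f s ≠ t := fun h => hxt (by rw [← hf x, hfxs, h])
    rw [← hf x, hfxs, removeP_apply_apply_left hf hst hs ht hfs,
      removeP_apply_apply_right hf hst hs hfs]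
  by_cases hfxt : f x = t
  · have hfs : f s ≠ t := fun h => hxs (by rw [← hf x, hfxt, ← h, hf])
    rw [← hf x, hfxt, removeP_apply_apply_right hf hst hs hfs,
      removeP_apply_apply_left hf hst hs ht hfs]
  rw [removeP_apply_of_ne hxs hxt hfxs hfxt, removeP_apply_of_ne hfxs hfxt (by rwa [hf])
    (by rwa [hf]), hf]

end removeP

theorem zpow_apply_mem {S : Finset α} {c : Perm α} (hc : ∀ a, c a ∈ S ↔ a ∈ S) (j : ℤ)
    {a : α} (ha : a ∈ S) : (c ^ j) a ∈ S := by
  simpa [Perm.subtypePerm_zpow] using ((c.subtypePerm hc ^ j) ⟨a, ha⟩).2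

theorem exists_pow_apply_eq_self {S : Finset α} {c : Perm α} (hc : ∀ a, c a ∈ S ↔ a ∈ S)
    {a : α} (ha : a ∈ S) : ∃ n, 0 < n ∧ (c ^ n) a = a := by
  obtain ⟨n, hn, h⟩ := (isOfFinOrder_of_finite (c.subtypePerm hc)).exists_pow_eq_one
  refine ⟨n, hn, ?_⟩
  simpa [Perm.subtypePerm_pow] using congrArg (fun g => (g ⟨a, ha⟩ : α)) h

namespace IsPairing

variable {S : Finset α} {f : Perm α}

theorem involutive (hf : IsPairing S f) : Function.Involutive f := hf.1

theorem apply_ne (hf : IsPairing S f) {a : α} (ha : a ∈ S) : f a ≠ a := (hf.2 a).mpr ha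

theorem apply_mem_iff (hf : IsPairing S f) {a : α} : f a ∈ S ↔ a ∈ S := by
  rw [← hf.2, ← hf.2, hf.1, ne_comm]

end IsPairing

def OrbitRel (A : Set (Perm α)) (x y : α) : Prop :=
  ∃ g ∈ Subgroup.closure A, g x = y

namespace OrbitRel

variable {A B : Set (Perm α)}

theorem equivalence (A : Set (Perm α)) : Equivalence (OrbitRel A) where
  refl _ := ⟨1, one_mem _, rfl⟩
  symm := fun ⟨g, hg, h⟩ => ⟨g⁻¹, inv_mem hg, by simp [← h]⟩
  trans := fun ⟨g, hg, h⟩ ⟨g', hg', h'⟩ =>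
    ⟨g' * g, mul_mem hg' hg, by rw [Perm.mul_apply, h, h']⟩

theorem of_mem {f : Perm α} (hf : f ∈ A) (x : α) : OrbitRel A x (f x) :=
  ⟨f, Subgroup.subset_closure hf, rfl⟩

theorem mono (hAB : A ⊆ B) {x y : α} : OrbitRel A x y → OrbitRel B x y :=
  fun ⟨g, hg, h⟩ => ⟨g, Subgroup.closure_mono hAB hg, h⟩

theorem of_forall_mem (h : ∀ f ∈ A, ∀ z, OrbitRel B z (f z)) {x y : α} :
    OrbitRel A x y → OrbitRel B x y := by
  rintro ⟨g, hg, rfl⟩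
  suffices ∀ z, OrbitRel B z (g z) from this x
  induction hg using Subgroup.closure_induction with
  | mem f hf => exact h f hf
  | one => exact (equivalence B).refl
  | mul g g' _ _ ihg ihg' => exact fun z => (equivalence B).trans (ihg' z) (ihg (g' z))
  | inv g _ ihg => exact fun z => by simpa using (equivalence B).symm (ihg (g⁻¹ z))

theorem imp_of_forall_mem (hA : ∀ f ∈ A, Function.Involutive f) {Q : α → Prop}
    (hQ : ∀ f ∈ A, ∀ z, Q z → Q (f z)) {x y : α} : OrbitRel A x y → Q x → Q y := by
  rintro ⟨g, hg, rfl⟩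
  suffices ∀ z, Q z ↔ Q (g z) from (this x).mp
  induction hg using Subgroup.closure_induction with
  | mem f hf => exact fun z => ⟨hQ f hf z, fun h => hA f hf z ▸ hQ f hf _ h⟩
  | one => exact fun z => Iff.rfl
  | mul g g' _ _ ihg ihg' => exact fun z => (ihg' z).trans (ihg (g' z))
  | inv g _ ihg => exact fun z => by simpa using (ihg (g⁻¹ z)).symm

end OrbitRel

theorem Equivalence.rel_swap_apply {R : α → α → Prop} (hR : Equivalence R) {u v : α}
    (huv : R u v) (y : α) : R y (swap u v y) := by
  rw [swap_apply_def]
  split_ifs with hu hv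
  · exact hu ▸ huv
  · exact hv ▸ hR.symm huv
  · exact hR.refl y

/-- A path of `A`-moves from `x` to `y` that passes through `T` can be rerouted through `p`,
since every move out of `T` lands `R`-close to `p`. -/
theorem OrbitRel.rel_of_bypass {A : Set (Perm α)} (hA : ∀ f ∈ A, Function.Involutive f)
    {R : α → α → Prop} (hR : Equivalence R) {T : Set α} {p : α}
    (hout : ∀ f ∈ A, ∀ z ∉ T, f z ∉ T → R z (f z))
    (hbdry : ∀ f ∈ A, ∀ z ∈ T, f z ∉ T → R p (f z))
    {x y : α} (hx : x ∉ T) (hy : y ∉ T) (hxy : OrbitRel A x y) : R x y := by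
  refine (hxy.imp_of_forall_mem hA (Q := fun z => (z ∈ T → R x p) ∧ (z ∉ T → R x z)) ?_
    ⟨fun h => absurd h hx, fun _ => hR.refl x⟩).2 hy
  rintro f hf z ⟨hzp, hzz⟩
  by_cases hz : z ∈ T <;> by_cases hfz : f z ∈ T
  · exact ⟨fun _ => hzp hz, fun h => absurd hfz h⟩
  · exact ⟨fun h => absurd h hfz, fun _ => hR.trans (hzp hz) (hbdry f hf z hz hfz)⟩
  · refine ⟨fun _ => hR.trans (hzz hz) ?_, fun h => absurd hfz h⟩
    exact hR.symm (hA f hf z ▸ hbdry f hf (f z) hfz (by rwa [hA f hf z]))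
  · exact ⟨fun h => absurd h hfz, fun _ => hR.trans (hzz hz) (hout f hf z hz hfz)⟩

def numClasses (S : Finset α) (R : α → α → Prop) : ℕ :=
  (S.image fun x => S.filter (R x)).card

theorem numClasses_sdiff {S T : Finset α} {R R' : α → α → Prop} (hR : Equivalence R)
    (hT : ∀ t ∈ S ∩ T, ∃ x ∈ S \ T, R t x)
    (hRR' : ∀ x ∈ S \ T, ∀ y ∈ S \ T, R' x y ↔ R x y) :
    numClasses (S \ T) R' = numClasses S R := by
  have hclass : ∀ {x y}, R x y → S.filter (R x) = S.filter (R y) := fun hxy =>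
    Finset.filter_congr fun z _ => ⟨hR.trans (hR.symm hxy), hR.trans hxy⟩
  have hrestrict : ∀ x ∈ S \ T, (S \ T).filter (R' x) = S.filter (R x) \ T := by
    intro x hx
    ext y
    simp only [Finset.mem_filter, Finset.mem_sdiff]
    have := hRR' x hx y
    simp only [Finset.mem_sdiff] at this
    tauto
  have hcover : S.image (fun x => S.filter (R x)) = (S \ T).image (fun x => S.filter (R x)) := by
    refine subset_antisymm (fun C hC => ?_) (Finset.image_subset_image Finset.sdiff_subset)
    obtain ⟨x, hxS, rfl⟩ := Finset.mem_image.mp hC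
    by_cases hxT : x ∈ T
    · obtain ⟨y, hy, hxy⟩ := hT x (Finset.mem_inter.mpr ⟨hxS, hxT⟩)
      exact Finset.mem_image.mpr ⟨y, hy, (hclass hxy).symm⟩
    · exact Finset.mem_image_of_mem _ (Finset.mem_sdiff.mpr ⟨hxS, hxT⟩)
  unfold numClasses
  rw [Finset.image_congr hrestrict]
  change ((S \ T).image ((· \ T) ∘ fun x => S.filter (R x))).card = _
  rw [← Finset.image_image, ← hcover]
  refine Finset.card_image_of_injOn ?_
  rintro _ hC _ hC' (hCC' : _ \ T = _ \ T)
  obtain ⟨x, hxS, rfl⟩ := Finset.mem_image.mp hC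
  obtain ⟨y, hyS, rfl⟩ := Finset.mem_image.mp hC'
  obtain ⟨z, hz, hxz⟩ : ∃ z ∈ S \ T, R x z := by
    by_cases hxT : x ∈ T
    · exact hT x (Finset.mem_inter.mpr ⟨hxS, hxT⟩)
    · exact ⟨x, Finset.mem_sdiff.mpr ⟨hxS, hxT⟩, hR.refl x⟩
  have hzy : z ∈ S.filter (R y) \ T := by
    rw [← hCC']; simp only [Finset.mem_sdiff, Finset.mem_filter] at hz ⊢
    exact ⟨⟨hz.1, hxz⟩, hz.2⟩
  simp only [Finset.mem_sdiff, Finset.mem_filter] at hzy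
  exact (hclass hxz).trans (hclass hzy.1.2).symm

theorem OrbitRel.of_image_removeP {A : Set (Perm α)} {s t : α} (hst : OrbitRel A s t)
    {x y : α} (h : OrbitRel ((removeP · s t) '' A) x y) : OrbitRel A x y := by
  have hR := OrbitRel.equivalence A
  refine h.of_forall_mem ?_
  rintro _ ⟨f, hf, rfl⟩ z
  have hsf : OrbitRel A t (f s) := hR.trans (hR.symm hst) (.of_mem hf s)
  have htf : OrbitRel A s (f t) := hR.trans hst (.of_mem hf t)
  rw [removeP_apply]
  exact hR.trans (.of_mem hf z) (hR.trans (hR.rel_swap_apply hsf _)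
    (hR.trans (hR.rel_swap_apply htf _) (hR.rel_swap_apply hst _)))

theorem OrbitRel.image_removeP {S : Finset α} {A : Set (Perm α)} (hA : ∀ f ∈ A, IsPairing S f)
    {s t p : α} (hs : s ∈ S) (ht : t ∈ S) (hst : s ≠ t)
    (hbdry : ∀ f ∈ A, f s ≠ t → OrbitRel ((removeP · s t) '' A) p (f s))
    {x y : α} (hx : x ∉ ({s, t} : Set α)) (hy : y ∉ ({s, t} : Set α)) (h : OrbitRel A x y) :
    OrbitRel ((removeP · s t) '' A) x y := by
  refine h.rel_of_bypass (fun f hf => (hA f hf).involutive) (OrbitRel.equivalence _) (p := p)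
    (fun f hf z hz hfz => ?_) (fun f hf z hz hfz => ?_) hx hy
  · simp only [Set.mem_insert_iff, Set.mem_singleton_iff, not_or] at hz hfz
    rw [← removeP_apply_of_ne hz.1 hz.2 hfz.1 hfz.2]
    exact .of_mem (Set.mem_image_of_mem _ hf) z
  · simp only [Set.mem_insert_iff, Set.mem_singleton_iff, not_or] at hz hfz
    obtain rfl | rfl := hz
    · exact hbdry f hf hfz.2
    · have hfs : f s ≠ z := fun h => hfz.1 (by rw [← h, (hA f hf).involutive])
      refine (OrbitRel.equivalence _).trans (hbdry f hf hfs) ?_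
      rw [← removeP_apply_apply_left (hA f hf).involutive hst ((hA f hf).apply_ne hs)
        ((hA f hf).apply_ne ht) hfs]
      exact .of_mem (Set.mem_image_of_mem _ hf) _

theorem numClasses_orbitRel_removeP {S : Finset α} {A : Set (Perm α)}
    (hA : ∀ f ∈ A, IsPairing S f) {s t : α} (hs : s ∈ S) (ht : t ∈ S) (hst : s ≠ t)
    (hst' : OrbitRel A s t) {f₀ : Perm α} (hf₀ : f₀ ∈ A) (hf₀s : f₀ s ≠ t)
    (hbdry : ∀ f ∈ A, f s ≠ t → OrbitRel ((removeP · s t) '' A) (f₀ s) (f s)) :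
    numClasses (S \ {s, t}) (OrbitRel ((removeP · s t) '' A)) = numClasses S (OrbitRel A) := by
  have hR := OrbitRel.equivalence A
  have hp : f₀ s ∈ S \ {s, t} := by
    simp only [Finset.mem_sdiff, Finset.mem_insert, Finset.mem_singleton, not_or]
    exact ⟨(hA f₀ hf₀).apply_mem_iff.mpr hs, (hA f₀ hf₀).apply_ne hs, hf₀s⟩
  refine numClasses_sdiff hR (fun u hu => ⟨f₀ s, hp, ?_⟩) fun x hx y hy =>
    ⟨OrbitRel.of_image_removeP hst', OrbitRel.image_removeP hA hs ht hst hbdry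
      (by simpa using (Finset.mem_sdiff.mp hx).2) (by simpa using (Finset.mem_sdiff.mp hy).2)⟩
  have hsp : OrbitRel A s (f₀ s) := .of_mem hf₀ s
  simp only [Finset.mem_inter, Finset.mem_insert, Finset.mem_singleton] at hu
  obtain ⟨-, rfl | rfl⟩ := hu
  exacts [hsp, hR.trans (hR.symm hst') hsp]

section Dihedral

variable {f g : Perm α}

theorem mul_self_eq_one_of_involutive (hf : Function.Involutive f) : f * f = 1 := Equiv.ext hf

theorem inv_mul_eq_of_involutive (hf : Function.Involutive f) (hg : Function.Involutive g) :
    (g * f)⁻¹ = f * g := by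
  rw [mul_inv_rev, inv_eq_of_mul_eq_one_right (mul_self_eq_one_of_involutive hf),
    inv_eq_of_mul_eq_one_right (mul_self_eq_one_of_involutive hg)]

theorem mul_zpow_eq_zpow_neg_mul_left (hf : Function.Involutive f) (hg : Function.Involutive g)
    (j : ℤ) : f * (g * f) ^ j = (g * f) ^ (-j) * f := by
  have h : SemiconjBy f (g * f) (g * f)⁻¹ := by
    rw [inv_mul_eq_of_involutive hf hg]; exact (mul_assoc _ _ _).symm
  rw [h.zpow_right j, inv_zpow, zpow_neg]

theorem mul_zpow_eq_zpow_neg_mul_right (hf : Function.Involutive f) (hg : Function.Involutive g)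
    (j : ℤ) : g * (g * f) ^ j = (g * f) ^ (-j) * g := by
  have h : SemiconjBy g (g * f) (g * f)⁻¹ := by
    rw [inv_mul_eq_of_involutive hf hg, SemiconjBy, ← mul_assoc, mul_self_eq_one_of_involutive hg,
      one_mul, mul_assoc, mul_self_eq_one_of_involutive hg, mul_one]
  rw [h.zpow_right j, inv_zpow, zpow_neg]

theorem mem_closure_pair_iff (hf : Function.Involutive f) (hg : Function.Involutive g)
    {h : Perm α} :
    h ∈ Subgroup.closure {f, g} ↔ ∃ j : ℤ, h = (g * f) ^ j ∨ h = (g * f) ^ j * f := by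
  have hff : f * f = 1 := mul_self_eq_one_of_involutive hf
  have hfmem : f ∈ Subgroup.closure {f, g} := Subgroup.subset_closure (by simp)
  have hgmem : g ∈ Subgroup.closure {f, g} := Subgroup.subset_closure (by simp)
  constructor
  · intro hh
    induction hh using Subgroup.closure_induction with
    | mem x hx =>
      rcases hx with rfl | rfl
      · exact ⟨0, Or.inr (by simp)⟩
      · exact ⟨1, Or.inr (by rw [zpow_one, mul_assoc, hff, mul_one])⟩
    | one => exact ⟨0, Or.inl (by simp)⟩
    | mul x y _ _ ihx ihy =>
      obtain ⟨i, rfl | rfl⟩ := ihx <;> obtain ⟨j, rfl | rfl⟩ := ihy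
      · exact ⟨i + j, Or.inl (zpow_add _ _ _).symm⟩
      · exact ⟨i + j, Or.inr (by rw [zpow_add, mul_assoc])⟩
      · exact ⟨i - j, Or.inr (by
          rw [mul_assoc, mul_zpow_eq_zpow_neg_mul_left hf hg, ← mul_assoc, ← zpow_add,
            sub_eq_add_neg])⟩
      · exact ⟨i - j, Or.inl (by
          rw [mul_assoc, ← mul_assoc f, mul_zpow_eq_zpow_neg_mul_left hf hg, mul_assoc, hff,
            mul_one, ← zpow_add, sub_eq_add_neg])⟩
    | inv x _ ihx =>
      obtain ⟨i, rfl | rfl⟩ := ihx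
      · exact ⟨-i, Or.inl (zpow_neg _ _).symm⟩
      · refine ⟨i, Or.inr ?_⟩
        rw [mul_inv_rev, inv_eq_of_mul_eq_one_right hff, ← zpow_neg,
          mul_zpow_eq_zpow_neg_mul_left hf hg, neg_neg]
  · rintro ⟨j, rfl | rfl⟩
    · exact zpow_mem (mul_mem hgmem hfmem) j
    · exact mul_mem (zpow_mem (mul_mem hgmem hfmem) j) hfmem

theorem sameFace_iff_orbitRel (hf : Function.Involutive f) (hg : Function.Involutive g) :
    SameFace f g = OrbitRel {f, g} := by
  ext x y
  simp only [OrbitRel, mem_closure_pair_iff hf hg]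
  constructor
  · rintro (⟨j, rfl⟩ | ⟨j, rfl⟩)
    · exact ⟨_, ⟨j, Or.inr rfl⟩, rfl⟩
    · exact ⟨_, ⟨j, Or.inl rfl⟩, rfl⟩
  · rintro ⟨_, ⟨j, rfl | rfl⟩, rfl⟩
    · exact Or.inr ⟨j, rfl⟩
    · exact Or.inl ⟨j, rfl⟩

end Dihedral

section FacePositions

variable {S : Finset α} {b w : Perm α} {s : α}

theorem mul_apply_mem_iff (hb : IsPairing S b) (hw : IsPairing S w) (a : α) :
    (w * b) a ∈ S ↔ a ∈ S := by
  rw [Perm.mul_apply, hw.apply_mem_iff, hb.apply_mem_iff]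

/-- Odd and even positions on a face never coincide. -/
theorem zpow_apply_ne_apply (hb : IsPairing S b) (hw : IsPairing S w) (hs : s ∈ S) (j : ℤ) :
    ((w * b) ^ j) s ≠ b s := by
  set c := w * b
  intro hj
  have hmem : ∀ i : ℤ, (c ^ i) s ∈ S := fun i => zpow_apply_mem (mul_apply_mem_iff hb hw) i hs
  obtain ⟨i, rfl | rfl⟩ := Int.even_or_odd' j
  · refine hb.apply_ne (hmem i) ?_
    calc b ((c ^ i) s) = (c ^ (-i)) (b s) := by
          rw [← Perm.mul_apply, mul_zpow_eq_zpow_neg_mul_left hb.involutive hw.involutive,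
            Perm.mul_apply]
      _ = (c ^ i) s := by rw [← hj, ← Perm.mul_apply, ← zpow_add]; congr 2; ring
  · refine hw.apply_ne (hmem (i + 1)) ?_
    calc w ((c ^ (i + 1)) s) = (c ^ (-(i + 1))) (w s) := by
          rw [← Perm.mul_apply, mul_zpow_eq_zpow_neg_mul_right hb.involutive hw.involutive,
            Perm.mul_apply]
      _ = (c ^ (-(i + 1))) (c (b s)) := by rw [Perm.mul_apply, hb.involutive]
      _ = (c ^ (i + 1)) s := by
          rw [← hj, ← Perm.mul_apply, ← Perm.mul_apply, ← zpow_add_one, ← zpow_add]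
          congr 2; ring

end FacePositions

theorem Equivalence.rel_of_pow_apply_eq {c : Perm α} {R : α → α → Prop} (hR : Equivalence R)
    {a a' : α} (ha' : R a' a)
    (hstep : ∀ x, (∃ n : ℕ, (c ^ n) x = a) → x ≠ a → x ≠ a' → R x (c x)) :
    ∀ (n : ℕ) {x : α}, (c ^ n) x = a → R x a := by
  intro n
  induction n with
  | zero => rintro x rfl; exact hR.refl _
  | succ n ih =>
    intro x hx
    by_cases hxa : x = a
    · exact hxa ▸ hR.refl a
    by_cases hxa' : x = a'
    · exact hxa' ▸ ha'
    have hcx : (c ^ n) (c x) = a := by rwa [← Perm.mul_apply, ← pow_succ]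
    exact hR.trans (hstep x ⟨n + 1, hx⟩ hxa hxa') (ih hcx)

namespace OddPos

variable {S : Finset α} {b w : Perm α} {s t : α}

theorem apply_left_ne (ht : OddPos b w s t) (hb : IsPairing S b) (hw : IsPairing S w)
    (hs : s ∈ S) : b s ≠ t := by
  obtain ⟨k, rfl⟩ := ht
  exact fun h => zpow_apply_ne_apply hb hw hs k h.symm

theorem apply_right_ne (ht : OddPos b w s t) (hb : IsPairing S b) (hw : IsPairing S w)
    (hs : s ∈ S) : w s ≠ t := by
  obtain ⟨k, rfl⟩ := ht
  intro h
  refine zpow_apply_ne_apply hb hw hs (k - 1) ((w * b).injective ?_)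
  rw [← Perm.mul_apply, ← zpow_one_add, Perm.mul_apply, hb.involutive, h]
  congr 2; ring

/-- Walk along the old face from `w s` until it hits `b s` or `b t`: no step of this walk
touches `s` or `t`, since the orbit of `b s` under `w * b` avoids them. -/
theorem orbitRel_removeP (ht : OddPos b w s t) (hb : IsPairing S b) (hw : IsPairing S w)
    (hs : s ∈ S) (hst : s ≠ t) :
    OrbitRel {removeP b s t, removeP w s t} (b s) (w s) := by
  have hbt := ht.apply_left_ne hb hw hs
  obtain ⟨k, rfl⟩ := ht
  set c := w * b
  set R := OrbitRel {removeP b s ((c ^ k) s), removeP w s ((c ^ k) s)}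
  have hR : Equivalence R := OrbitRel.equivalence _
  have hc : ∀ a, c a ∈ S ↔ a ∈ S := mul_apply_mem_iff hb hw
  have htS : (c ^ k) s ∈ S := zpow_apply_mem hc k hs
  have hback : ∀ (j : ℤ) {y z : α}, (c ^ j) y = z → y = (c ^ (-j)) z := fun j y z h => by
    rw [zpow_neg, Perm.eq_inv_iff_eq, h]
  have hoff : ∀ j : ℤ, (c ^ j) (b s) ≠ s ∧ (c ^ j) (b s) ≠ (c ^ k) s := by
    refine fun j => ⟨fun h => ?_, fun h => ?_⟩
    · exact zpow_apply_ne_apply hb hw hs (-j) (hback j h).symm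
    · refine zpow_apply_ne_apply hb hw hs (-j + k) ?_
      rw [zpow_add, Perm.mul_apply, hback j h]
  have hbb : R (b ((c ^ k) s)) (b s) := by
    refine hR.symm ?_
    rw [← removeP_apply_apply_left hb.involutive hst (hb.apply_ne hs) (hb.apply_ne htS) hbt]
    exact OrbitRel.of_mem (by simp) _
  have hstep :
      ∀ x, (∃ n : ℕ, (c ^ n) x = b s) → x ≠ b s → x ≠ b ((c ^ k) s) → R x (c x) := by
    rintro x ⟨n, hn⟩ hxs hxt
    have hx : x = (c ^ (-(n : ℤ))) (b s) := hback n (by rwa [zpow_natCast])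
    have hcx : c x = (c ^ (1 - (n : ℤ))) (b s) := by
      rw [hx, ← Perm.mul_apply, ← zpow_one_add, sub_eq_add_neg]
    have hbxs : b x ≠ s := fun h => hxs (by rw [← h, hb.involutive])
    have hbxt : b x ≠ (c ^ k) s := fun h => hxt (by rw [← h, hb.involutive])
    have h1 : R x (b x) := by
      rw [← removeP_apply_of_ne (hx ▸ (hoff _).1) (hx ▸ (hoff _).2) hbxs hbxt]
      exact OrbitRel.of_mem (by simp) _
    have h2 : R (b x) (c x) := by
      rw [show c x = w (b x) from rfl, ← removeP_apply_of_ne hbxs hbxt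
        (hcx ▸ (hoff _).1) (hcx ▸ (hoff _).2)]
      exact OrbitRel.of_mem (by simp) _
    exact hR.trans h1 h2
  obtain ⟨n, hn, hper⟩ := exists_pow_apply_eq_self hc (hb.apply_mem_iff.mpr hs)
  have hws : (c ^ (n - 1)) (w s) = b s := by
    rw [show w s = c (b s) by rw [Perm.mul_apply, hb.involutive], ← Perm.mul_apply, ← pow_succ,
      Nat.sub_add_cancel hn, hper]
  exact hR.symm (hR.rel_of_pow_apply_eq hbb hstep (n - 1) hws)

end OddPos

theorem numFaces_eq_numClasses {S : Finset α} {f g : Perm α} (hf : Function.Involutive f)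
    (hg : Function.Involutive g) : numFaces S f g = numClasses S (OrbitRel {f, g}) := by
  rw [← sameFace_iff_orbitRel hf hg]; rfl

theorem numFaces_removeP {S : Finset α} {f g : Perm α} (hf : IsPairing S f) (hg : IsPairing S g)
    {s t : α} (hs : s ∈ S) (ht : t ∈ S) (hst : s ≠ t) (hface : SameFace f g s t)
    (hfs : f s ≠ t)
    (hgs : g s ≠ t → OrbitRel {removeP f s t, removeP g s t} (f s) (g s)) :
    numFaces (S \ {s, t}) (removeP f s t) (removeP g s t) = numFaces S f g := by
  have hA : ∀ h ∈ ({f, g} : Set (Perm α)), IsPairing S h := by simp [hf, hg]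
  have himage : (removeP · s t) '' {f, g} = {removeP f s t, removeP g s t} := Set.image_pair ..
  rw [numFaces_eq_numClasses hf.involutive hg.involutive, numFaces_eq_numClasses
    (removeP_involutive hf.involutive hst (hf.apply_ne hs) (hf.apply_ne ht))
    (removeP_involutive hg.involutive hst (hg.apply_ne hs) (hg.apply_ne ht)), ← himage]
  refine numClasses_orbitRel_removeP hA hs ht hst
    ((sameFace_iff_orbitRel hf.involutive hg.involutive) ▸ hface) (by simp) hfs ?_
  simp only [Set.mem_insert_iff, Set.mem_singleton_iff, forall_eq_or_imp, forall_eq, himage]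
  exact ⟨fun _ => (OrbitRel.equivalence _).refl _, hgs⟩

theorem numComponents_eq_numClasses (S : Finset α) (b w e : Perm α) :
    numComponents S b w e = numClasses S (OrbitRel {b, w, e}) := rfl

theorem numComponents_removeP {S : Finset α} {b w e : Perm α} (hb : IsPairing S b)
    (hw : IsPairing S w) (he : IsPairing S e) {s : α} (hs : s ∈ S) (hbs : b s ≠ e s)
    (hcorner : OrbitRel {removeP b s (e s), removeP w s (e s)} (b s) (w s)) :
    numComponents (S \ {s, e s}) (removeP b s (e s)) (removeP w s (e s)) (removeP e s (e s)) =
      numComponents S b w e := by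
  have hA : ∀ h ∈ ({b, w, e} : Set (Perm α)), IsPairing S h := by simp [hb, hw, he]
  have himage : (removeP · s (e s)) '' {b, w, e} =
      {removeP b s (e s), removeP w s (e s), removeP e s (e s)} := by
    simp only [Set.image_insert_eq, Set.image_singleton]
  rw [numComponents_eq_numClasses, numComponents_eq_numClasses, ← himage]
  refine numClasses_orbitRel_removeP hA hs (he.apply_mem_iff.mpr hs) (he.apply_ne hs).symm
    (.of_mem (by simp) s) (f₀ := b) (by simp) hbs ?_
  simp only [Set.mem_insert_iff, Set.mem_singleton_iff, forall_eq_or_imp, forall_eq, himage]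
  refine ⟨fun _ => (OrbitRel.equivalence _).refl _, fun _ => hcorner.mono ?_, (absurd rfl ·)⟩
  intro x
  simp only [Set.mem_insert_iff, Set.mem_singleton_iff]
  tauto

theorem numEdges_sdiff_pair {S : Finset α} {s t : α} (hs : s ∈ S) (ht : t ∈ S)
    (hst : s ≠ t) :
    numEdges S = numEdges (S \ {s, t}) + 1 := by
  have hsub : {s, t} ⊆ S := Finset.insert_subset hs (Finset.singleton_subset_iff.mpr ht)
  have hcard := Finset.card_sdiff_add_card_eq_card hsub
  rw [Finset.card_pair hst] at hcard
  unfold numEdges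
  omega

/-- if `E₀ = {s, e s}` is a twisted edge of the map `M = (S,b,w,e)`,
then no extremity of `E₀` is a leaf, and `M \ E₀` has the same numbers of vertices,
faces and connected components as `M`, and one fewer edge; consequently
`d(M \ E₀) = d(M) - 1`. -/
theorem remove_twisted_edge (S : Finset α) (b w e : Equiv.Perm α)
    (hb : IsPairing S b) (hw : IsPairing S w) (he : IsPairing S e)
    (s : α) (hs : s ∈ S)
    (htwisted : IsTwisted b w s (e s)) :
    (b s ≠ e s ∧ w s ≠ e s) ∧
    numVertices (S \ {s, e s}) (removeP b s (e s)) (removeP w s (e s))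
        (removeP e s (e s)) = numVertices S b w e ∧
    numFaces (S \ {s, e s}) (removeP b s (e s)) (removeP w s (e s)) = numFaces S b w ∧
    numComponents (S \ {s, e s}) (removeP b s (e s)) (removeP w s (e s))
        (removeP e s (e s)) = numComponents S b w e ∧
    numEdges S = numEdges (S \ {s, e s}) + 1 ∧
    dInv (S \ {s, e s}) (removeP b s (e s)) (removeP w s (e s)) (removeP e s (e s))
      = dInv S b w e - 1 := by
  have ht : e s ∈ S := he.apply_mem_iff.mpr hs
  have hst : s ≠ e s := (he.apply_ne hs).symm
  have hbs : b s ≠ e s := htwisted.2.apply_left_ne hb hw hs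
  have hws : w s ≠ e s := htwisted.2.apply_right_ne hb hw hs
  have hcorner := htwisted.2.orbitRel_removeP hb hw hs hst
  have hV : numVertices (S \ {s, e s}) (removeP b s (e s)) (removeP w s (e s))
      (removeP e s (e s)) = numVertices S b w e := by
    have hedge : ∀ {f : Perm α}, Function.Involutive f → SameFace f e s (e s) :=
      fun hf => Or.inl ⟨1, by simp [hf s]⟩
    unfold numVertices
    rw [numFaces_removeP hb he hs ht hst (hedge hb.involutive) hbs (absurd rfl),
      numFaces_removeP hw he hs ht hst (hedge hw.involutive) hws (absurd rfl)]
  have hF := numFaces_removeP hb hw hs ht hst htwisted.1 hbs fun _ => hcorner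
  have hC := numComponents_removeP hb hw he hs hbs hcorner
  have hE := numEdges_sdiff_pair hs ht hst
  refine ⟨⟨hbs, hws⟩, hV, hF, hC, hE, ?_⟩
  unfold dInv eulerChar
  rw [hV, hF, hC, hE]
  push_cast
  ring

end
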